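/- arXiv:2007.13189 — 2 statements merged into one kernel-verified Lean document; each statement's English description precedes it below -/
import Mathlib

section
/- For odd n > 1, the Gram matrix of the 2n-th cyclotomic polynomial satisfies (M†_{Φ_{2n}} M_{Φ_{2n}})_{ij} = (-1)^{i+j} (M†_{Φ_n} M_{Φ_n})_{ij} for all 0 ≤ i,j ≤ φ(n)-1. -/
open Finset Matrix

/-- The Ramanujan sum `c_n(m) = Σ_{gcd(k,n)=1, 1≤k≤n} exp(2πi·k·m/n)`. -/
noncomputable def ramanujanSum (n : ℕ) (m : ℤ) : ℂ :=
  ∑ k ∈ (Icc 1 n).filter (fun k => Nat.Coprime k n),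
    Complex.exp (2 * Real.pi * Complex.I * (k : ℂ) * (m : ℂ) / (n : ℂ))

/-- The Gram matrix `M†M` of the Vandermonde matrix of the primitive `n`-th roots
of unity; its `(i,j)` entry is the Ramanujan sum `c_n(i-j)`. -/
noncomputable def cycGram (n : ℕ) : Matrix (Fin n.totient) (Fin n.totient) ℂ :=
  fun i j => ramanujanSum n ((i : ℤ) - (j : ℤ))

lemma exp_shift (n : ℕ) (hn : 0 < n) (m : ℤ) (k j : ℕ)
    (hk : (k : ℤ) = 2 * j - n ∨ (k : ℤ) = 2 * j + n) :
    Complex.exp (2 * Real.pi * Complex.I * (k : ℂ) * (m : ℂ) / ((2 * n : ℕ) : ℂ))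
      = (-1 : ℂ) ^ m * Complex.exp (2 * Real.pi * Complex.I * (j : ℂ) * (m : ℂ) / (n : ℂ)) := by
  have hn' : (n : ℂ) ≠ 0 := Nat.cast_ne_zero.mpr hn.ne'
  have hm : ∀ ε : ℤ, (ε = 1 ∨ ε = -1) → Complex.exp ((ε * m : ℤ) * (Real.pi * Complex.I))
      = (-1 : ℂ) ^ m := by
    rintro ε (rfl | rfl)
    · rw [Complex.exp_int_mul, Complex.exp_pi_mul_I, one_mul]
    · rw [Complex.exp_int_mul, Complex.exp_pi_mul_I, neg_one_mul, _root_.zpow_neg, ← _root_.inv_zpow,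
        inv_neg, inv_one]
  rcases hk with hk | hk
  · have hkc : (k : ℂ) = 2 * j - n := by exact_mod_cast congrArg (Int.cast : ℤ → ℂ) hk
    have : 2 * Real.pi * Complex.I * (k : ℂ) * (m : ℂ) / ((2 * n : ℕ) : ℂ)
        = 2 * Real.pi * Complex.I * (j : ℂ) * (m : ℂ) / (n : ℂ)
          + ((-1 * m : ℤ) : ℂ) * (Real.pi * Complex.I) := by
      rw [hkc]; push_cast; field_simp; ring
    rw [this, Complex.exp_add, hm (-1) (Or.inr rfl), mul_comm]
  · have hkc : (k : ℂ) = 2 * j + n := by exact_mod_cast congrArg (Int.cast : ℤ → ℂ) hk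
    have : 2 * Real.pi * Complex.I * (k : ℂ) * (m : ℂ) / ((2 * n : ℕ) : ℂ)
        = 2 * Real.pi * Complex.I * (j : ℂ) * (m : ℂ) / (n : ℂ)
          + ((1 * m : ℤ) : ℂ) * (Real.pi * Complex.I) := by
      rw [hkc]; push_cast; field_simp
    rw [this, Complex.exp_add, hm 1 (Or.inl rfl), mul_comm]

lemma ramanujanSum_two_mul (n : ℕ) (hn : 1 < n) (hodd : Odd n) (m : ℤ) :
    ramanujanSum (2 * n) m = (-1 : ℂ) ^ m * ramanujanSum n m := by
  have hn0 : 0 < n := by omega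
  have hn2 : n % 2 = 1 := Nat.odd_iff.mp hodd
  unfold ramanujanSum
  rw [Finset.mul_sum]
  refine Finset.sum_nbij' (i := fun k => if k ≤ n then (k + n) / 2 else (k - n) / 2)
    (j := fun j => if n < 2 * j then 2 * j - n else 2 * j + n) ?_ ?_ ?_ ?_ ?_
  · -- forward membership
    intro k hk
    simp only [Finset.mem_filter, Finset.mem_Icc] at hk ⊢
    obtain ⟨⟨hk1, hk2⟩, hcop⟩ := hk
    rw [Nat.coprime_mul_iff_right] at hcop
    obtain ⟨hcop2, hcopn⟩ := hcop
    have hkodd : k % 2 = 1 := Nat.odd_iff.mp (Nat.coprime_two_right.mp hcop2)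
    by_cases hle : k ≤ n
    · simp only [hle, if_pos]
      have h2j : 2 * ((k + n) / 2) = k + n := by omega
      refine ⟨⟨by omega, by omega⟩, ?_⟩
      have : Nat.Coprime (2 * ((k + n) / 2)) n := by
        rw [h2j]; exact Nat.coprime_add_self_left.mpr hcopn
      exact Nat.Coprime.coprime_dvd_left (dvd_mul_left _ 2) this
    · simp only [hle, if_neg, not_false_iff]
      have hkgt : n < k := by omega
      have h2j : 2 * ((k - n) / 2) = k - n := by omega
      refine ⟨⟨by omega, by omega⟩, ?_⟩
      have e : k - n + n = k := by omega
      have hkn : Nat.Coprime (k - n) n :=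
        Nat.coprime_add_self_left.mp (by rw [e]; exact hcopn)
      have : Nat.Coprime (2 * ((k - n) / 2)) n := by rw [h2j]; exact hkn
      exact Nat.Coprime.coprime_dvd_left (dvd_mul_left _ 2) this
  · -- backward membership
    intro j hj
    simp only [Finset.mem_filter, Finset.mem_Icc] at hj ⊢
    obtain ⟨⟨hj1, hj2⟩, hcop⟩ := hj
    have h2j : Nat.Coprime (2 * j) n := Nat.Coprime.mul (Nat.coprime_two_left.mpr hodd) hcop
    by_cases hlt : n < 2 * j
    · simp only [hlt, if_pos]
      refine ⟨⟨by omega, by omega⟩, ?_⟩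
      rw [Nat.coprime_mul_iff_right]
      constructor
      · rw [Nat.coprime_two_right, Nat.odd_iff]; omega
      · have e : 2 * j - n + n = 2 * j := by omega
        exact Nat.coprime_add_self_left.mp (by rw [e]; exact h2j)
    · simp only [hlt, if_neg, not_false_iff]
      refine ⟨⟨by omega, by omega⟩, ?_⟩
      rw [Nat.coprime_mul_iff_right]
      constructor
      · rw [Nat.coprime_two_right, Nat.odd_iff]; omega
      · exact Nat.coprime_add_self_left.mpr h2j
  · -- left inverse
    intro k hk
    simp only [Finset.mem_filter, Finset.mem_Icc] at hk
    obtain ⟨⟨hk1, hk2⟩, hcop⟩ := hk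
    rw [Nat.coprime_mul_iff_right] at hcop
    have hkodd : k % 2 = 1 := Nat.odd_iff.mp (Nat.coprime_two_right.mp hcop.1)
    by_cases hle : k ≤ n <;> simp only [hle, if_pos, if_neg, not_false_iff] <;>
      split_ifs <;> omega
  · -- right inverse
    intro j hj
    simp only [Finset.mem_filter, Finset.mem_Icc] at hj
    obtain ⟨⟨hj1, hj2⟩, hcop⟩ := hj
    by_cases hlt : n < 2 * j <;> simp only [hlt, if_pos, if_neg, not_false_iff] <;>
      split_ifs <;> omega
  · -- value equality
    intro k hk
    simp only [Finset.mem_filter, Finset.mem_Icc] at hk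
    obtain ⟨⟨hk1, hk2⟩, hcop⟩ := hk
    rw [Nat.coprime_mul_iff_right] at hcop
    have hkodd : k % 2 = 1 := Nat.odd_iff.mp (Nat.coprime_two_right.mp hcop.1)
    by_cases hle : k ≤ n
    · simp only [hle, if_pos]
      exact exp_shift n hn0 m k ((k + n) / 2) (Or.inl (by omega))
    · simp only [hle, if_neg, not_false_iff]
      exact exp_shift n hn0 m k ((k - n) / 2) (Or.inr (by omega))

/-- For odd `n > 1`, `(M†_{Φ_{2n}} M_{Φ_{2n}})_{ij} = (-1)^(i+j) (M†_{Φ_n} M_{Φ_n})_{ij}`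
(note `φ(2n) = φ(n)` for odd `n`). -/
theorem cycGram_two_mul (n : ℕ) (hn : 1 < n) (hodd : Odd n)
    (h : Nat.totient n = Nat.totient (2 * n)) :
    ∀ i j : Fin (Nat.totient n),
      cycGram (2 * n) (Fin.cast h i) (Fin.cast h j)
        = (-1 : ℂ) ^ ((i : ℕ) + (j : ℕ)) * cycGram n i j := by
  intro i j
  have key := ramanujanSum_two_mul n hn hodd ((i : ℤ) - (j : ℤ))
  simp only [cycGram, Fin.coe_cast]
  rw [key]
  congr 1
  have h1 : ((i : ℤ) - (j : ℤ)) = ((i : ℕ) + (j : ℕ) : ℕ) - 2 * (j : ℤ) := by push_cast; ring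
  rw [h1, zpow_sub₀ (by norm_num : (-1 : ℂ) ≠ 0), zpow_natCast]
  have h2 : ((-1 : ℂ)) ^ (2 * (j : ℤ)) = 1 := by
    rw [_root_.zpow_mul]; norm_num
  rw [h2, div_one]
end

section
/- (Yu–Gu lower bound) For an invertible n×n complex matrix A with n ≥ 2, σ_min(A) ≥ |det A| · ((n-1)/‖A‖_F²)^{(n-1)/2}, where ‖A‖_F is the Frobenius norm. -/
open Finset Matrix

/-- The smallest singular value of a square complex matrix. -/
noncomputable def sigmaMin {n : ℕ} (A : Matrix (Fin n) (Fin n) ℂ) : ℝ :=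
  Real.sqrt (⨅ i, (Matrix.isHermitian_conjTranspose_mul_self A).eigenvalues i)

/-!
The squared singular values `μᵢ` of `A` are the eigenvalues of `Aᴴ A`, so `∏ μᵢ = |det A|²` and
`∑ μᵢ = ‖A‖_F²`. Applying AM-GM to the `n - 1` eigenvalues other than `μᵢ` gives
`|det A|² ≤ μᵢ (‖A‖_F² / (n - 1))^(n-1)` for every `i`, in particular for the smallest one.
-/

namespace Real

theorem prod_le_arith_mean_pow {ι : Type*} (s : Finset ι) {f : ι → ℝ} (hf : ∀ i ∈ s, 0 ≤ f i) :
    ∏ i ∈ s, f i ≤ ((∑ i ∈ s, f i) / #s) ^ #s := by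
  rcases s.eq_empty_or_nonempty with rfl | hs
  · simp
  have hcard : (0 : ℝ) < #s := by exact_mod_cast hs.card_pos
  have h := geom_mean_le_arith_mean s (fun _ ↦ 1) f (fun _ _ ↦ zero_le_one) (by simpa using hcard) hf
  simp only [rpow_one, sum_const, nsmul_eq_mul, mul_one, one_mul] at h
  rwa [rpow_inv_le_iff_of_pos (prod_nonneg hf) (div_nonneg (sum_nonneg hf) hcard.le) hcard,
    rpow_natCast] at h

theorem prod_mul_pow_le_of_nonneg {ι : Type*} [Fintype ι] [DecidableEq ι] {μ : ι → ℝ}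
    (hμ : ∀ i, 0 ≤ μ i) (i : ι) :
    (∏ j, μ j) * ((Fintype.card ι - 1) / ∑ j, μ j) ^ (Fintype.card ι - 1) ≤ μ i := by
  set k := Fintype.card ι - 1
  set S := ∑ j, μ j
  have hS : 0 ≤ S := sum_nonneg fun j _ ↦ hμ j
  have hk : (k : ℝ) = Fintype.card ι - 1 := by
    rw [Nat.cast_sub (Fintype.card_pos_iff.mpr ⟨i⟩), Nat.cast_one]
  have hcard : #(univ.erase i) = k := by rw [card_erase_of_mem (mem_univ i), card_univ]
  have hothers : ∏ j ∈ univ.erase i, μ j ≤ (S / k) ^ k := by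
    calc ∏ j ∈ univ.erase i, μ j ≤ ((∑ j ∈ univ.erase i, μ j) / k) ^ k := by
          simpa only [hcard] using prod_le_arith_mean_pow (univ.erase i) fun j _ ↦ hμ j
      _ ≤ (S / k) ^ k := by
          have hothers_nonneg := sum_nonneg fun j (_ : j ∈ univ.erase i) ↦ hμ j
          gcongr
          exact sum_le_sum_of_subset_of_nonneg (subset_univ _) fun j _ _ ↦ hμ j
  rw [← hk]
  calc (∏ j, μ j) * (k / S) ^ k = μ i * ((∏ j ∈ univ.erase i, μ j) * (k / S) ^ k) := by
        rw [← mul_prod_erase univ μ (mem_univ i), mul_assoc]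
    _ ≤ μ i * ((S / k) ^ k * (k / S) ^ k) := by gcongr; exact hμ i
    _ = μ i * ((S * k) / (S * k)) ^ k := by rw [← mul_pow, div_mul_div_comm, mul_comm (k : ℝ) S]
    _ ≤ μ i * 1 := by
        -- `S` may vanish; `a / a ≤ 1` also holds for `a = 0`.
        gcongr
        · exact hμ i
        · exact pow_le_one₀ (by positivity) (div_self_le_one _)
    _ = μ i := mul_one _

end Real

namespace Matrix

variable {𝕜 : Type*} [RCLike 𝕜] {m n : Type*} [Fintype m] [Fintype n]

theorem trace_conjTranspose_mul_self_eq_sum_norm_sq (A : Matrix m n 𝕜) :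
    (Aᴴ * A).trace = ∑ i, ∑ j, ((‖A i j‖ ^ 2 : ℝ) : 𝕜) := by
  simp only [trace, diag, mul_apply, conjTranspose_apply, RCLike.star_def, RCLike.conj_mul]
  rw [sum_comm]
  push_cast
  rfl

variable [DecidableEq n]

theorem sum_eigenvalues_conjTranspose_mul_self (A : Matrix m n 𝕜) :
    ∑ i, (isHermitian_conjTranspose_mul_self A).eigenvalues i = ∑ i, ∑ j, ‖A i j‖ ^ 2 := by
  have h := (isHermitian_conjTranspose_mul_self A).trace_eq_sum_eigenvalues.symm.trans
    (trace_conjTranspose_mul_self_eq_sum_norm_sq A)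
  exact_mod_cast h

theorem prod_eigenvalues_conjTranspose_mul_self (A : Matrix n n 𝕜) :
    ∏ i, (isHermitian_conjTranspose_mul_self A).eigenvalues i = ‖A.det‖ ^ 2 := by
  have h := (isHermitian_conjTranspose_mul_self A).det_eq_prod_eigenvalues.symm
  rw [det_mul, det_conjTranspose, RCLike.star_def, RCLike.conj_mul] at h
  exact_mod_cast h

end Matrix

theorem le_sigmaMin {n : ℕ} [Nonempty (Fin n)] (A : Matrix (Fin n) (Fin n) ℂ) {c : ℝ}
    (hc : ∀ i, c ^ 2 ≤ (isHermitian_conjTranspose_mul_self A).eigenvalues i) :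
    c ≤ sigmaMin A :=
  Real.le_sqrt_of_sq_le (le_ciInf hc)

theorem yu_gu_lower_bound_general (n : ℕ) (hn : 2 ≤ n)
    (A : Matrix (Fin n) (Fin n) ℂ) :
    sigmaMin A ≥ ‖A.det‖ *
      (((n : ℝ) - 1) / (∑ i, ∑ j, ‖A i j‖ ^ 2)) ^ (((n : ℝ) - 1) / 2) := by
  have : Nonempty (Fin n) := ⟨⟨0, by omega⟩⟩
  have hn1 : ((n - 1 : ℕ) : ℝ) = n - 1 := by rw [Nat.cast_sub (by omega), Nat.cast_one]
  set x := ((n : ℝ) - 1) / ∑ i, ∑ j, ‖A i j‖ ^ 2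
  have hx : 0 ≤ x := div_nonneg (by rw [← hn1]; positivity) (by positivity)
  refine le_sigmaMin A fun i ↦ ?_
  have h := Real.prod_mul_pow_le_of_nonneg (eigenvalues_conjTranspose_mul_self_nonneg A) i
  rw [prod_eigenvalues_conjTranspose_mul_self, sum_eigenvalues_conjTranspose_mul_self,
    Fintype.card_fin] at h
  calc (‖A.det‖ * x ^ (((n : ℝ) - 1) / 2)) ^ 2 = ‖A.det‖ ^ 2 * x ^ (n - 1) := by
        rw [mul_pow, ← Real.rpow_mul_natCast hx, ← Real.rpow_natCast x, hn1]
        norm_num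
    _ ≤ _ := h

/-- Yu–Gu lower bound: for an invertible `n×n` complex matrix `A` with `n ≥ 2`,
`σ_min(A) ≥ |det A| · ((n-1)/‖A‖_F²)^((n-1)/2)`, where `‖A‖_F² = Σᵢⱼ |aᵢⱼ|²`
is the squared Frobenius norm. -/
theorem yu_gu_lower_bound (n : ℕ) (hn : 2 ≤ n)
    (A : Matrix (Fin n) (Fin n) ℂ) (hA : IsUnit A.det) :
    sigmaMin A ≥ ‖A.det‖ *
      (((n : ℝ) - 1) / (∑ i, ∑ j, ‖A i j‖ ^ 2)) ^ (((n : ℝ) - 1) / 2) :=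
  yu_gu_lower_bound_general n hn A
end
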